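/- arXiv:2005.02975 — 3 statements merged into one kernel-verified Lean document; each statement's English description precedes it below -/
import Mathlib

section
/- The funny tensor product is characterized by an adjunction: the functor − □ C is left adjoint to the functor C ⇒ −, where C ⇒ D is the category whose objects are functors C → D and whose morphisms are arbitrary (not necessarily natural) transformations. -/
/-!
Since `Cat` has pushouts, `D □ C` can be taken to be the chosen pushout, and only its universal
property is needed. A functor `D □ C ⥤ E` is then a functor `u : D₀ × C ⥤ E` (a functor `C ⥤ E`
for every object of `D`) together with a functor `v : D × C₀ ⥤ E` (a functor `D ⥤ E` for every
object of `C`) that agree on objects. This is exactly a functor `D ⥤ (C ⇒ E)`: `u` gives its values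
on objects and `v` the components of its values on morphisms, which need not be natural. The
bijection is natural in `E`, so it determines `− □ C` on morphisms and makes it left adjoint to
`C ⇒ −`.
-/

open CategoryTheory CategoryTheory.Limits

universe u

/-- The inclusion `D₀ × C₀ → D₀ × C` in `Cat`, where `D₀` is the discrete category
on the objects of `D`. -/
def funnyLeftLeg (D C : Cat.{u, u}) :
    Cat.of (Discrete ↥D × Discrete ↥C) ⟶ Cat.of (Discrete ↥D × ↥C) :=
  ((𝟭 (Discrete ↥D)).prod (Discrete.functor fun c => (c : ↥C))).toCatHom

/-- The inclusion `D₀ × C₀ → D × C₀` in `Cat`. -/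
def funnyRightLeg (D C : Cat.{u, u}) :
    Cat.of (Discrete ↥D × Discrete ↥C) ⟶ Cat.of (↥D × Discrete ↥C) :=
  ((Discrete.functor fun d => (d : ↥D)).prod (𝟭 (Discrete ↥C))).toCatHom

/-- `UnnatCat C D` is the category of functors `C ⥤ D` and arbitrary (not
necessarily natural) transformations: a morphism `F ⟶ G` assigns to every
object `x` of `C` a morphism `F x ⟶ G x`, with no naturality condition. -/
def UnnatCat (C D : Type u) [Category.{u} C] [Category.{u} D] : Type u :=
  C ⥤ D

instance (C D : Type u) [Category.{u} C] [Category.{u} D] :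
    Category.{u} (UnnatCat C D) where
  Hom F G := ∀ x : C, (F : C ⥤ D).obj x ⟶ (G : C ⥤ D).obj x
  id F := fun x => 𝟙 _
  comp η θ := fun x => η x ≫ θ x

namespace UnnatCat

variable {C E E' : Type u} [Category.{u} C] [Category.{u} E] [Category.{u} E']

lemma comp_apply {F G H : UnnatCat C E} (η : F ⟶ G) (θ : G ⟶ H) (x : C) :
    (η ≫ θ) x = η x ≫ θ x := rfl

lemma eqToHom_apply {F G : UnnatCat C E} (h : F = G) (x : C) :
    (eqToHom h : F ⟶ G) x = eqToHom (by rw [h]) := by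
  subst h
  rfl

lemma functor_ext {B : Type u} [Category.{u} B] {Φ Ψ : B ⥤ UnnatCat C E}
    (hobj : ∀ b, Φ.obj b = Ψ.obj b)
    (hmap : ∀ ⦃b b' : B⦄ (f : b ⟶ b') (c : C),
      Φ.map f c = eqToHom (by rw [hobj]) ≫ Ψ.map f c ≫ eqToHom (by rw [hobj])) :
    Φ = Ψ :=
  CategoryTheory.Functor.ext hobj fun _ _ f => funext fun c => by
    -- `UnnatCat C E` is `C ⥤ E` only up to unfolding, so `rw` and `simp` miss these lemmas.
    erw [hmap, comp_apply, comp_apply, eqToHom_apply, eqToHom_apply]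

def postcomp (g : E ⥤ E') : UnnatCat C E ⥤ UnnatCat C E' where
  obj F := (F : C ⥤ E) ⋙ g
  map η x := g.map (η x)
  map_id _ := funext fun _ => g.map_id _
  map_comp _ _ := funext fun _ => g.map_comp _ _

def restrict : UnnatCat C E ⥤ (Discrete C ⥤ E) where
  obj F := Discrete.functor (F : C ⥤ E).obj
  map η := Discrete.natTrans fun x => η x.as

end UnnatCat

def unnatCatFunctor (C : Cat.{u, u}) : Cat.{u, u} ⥤ Cat.{u, u} where
  obj E := Cat.of (UnnatCat C E)
  map g := (UnnatCat.postcomp g.toFunctor).toCatHom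

namespace FunnyTensor

open Functor

variable {D C E E' : Type u} [Category.{u} D] [Category.{u} C] [Category.{u} E] [Category.{u} E']

def columns (Φ : D ⥤ UnnatCat C E) : Discrete D × C ⥤ E :=
  uncurry.obj (Discrete.functor (C := C ⥤ E) Φ.obj)

def rows (Φ : D ⥤ UnnatCat C E) : D × Discrete C ⥤ E :=
  uncurry.obj (Φ ⋙ UnnatCat.restrict)

lemma columns_rows_agree (Φ : D ⥤ UnnatCat C E) :
    (𝟭 (Discrete D)).prod (Discrete.functor fun c => c) ⋙ columns Φ =
      (Discrete.functor fun d => d).prod (𝟭 (Discrete C)) ⋙ rows Φ := by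
  refine CategoryTheory.Functor.ext (fun _ => rfl) fun X Y f => ?_
  obtain rfl : X = Y :=
    Prod.ext (Discrete.ext (Discrete.eq_of_hom f.1)) (Discrete.ext (Discrete.eq_of_hom f.2))
  obtain rfl : f = 𝟙 X := Subsingleton.elim _ _
  simp only [CategoryTheory.Functor.map_id, Category.id_comp]
  exact ((eqToHom_trans _ _).trans (eqToHom_refl _ _)).symm

section Glue

variable (u : Discrete D × C ⥤ E) (v : D × Discrete C ⥤ E)
  (huv : ∀ d c, u.obj (⟨d⟩, c) = v.obj (d, ⟨c⟩))

/- Agreement on objects is all that is asked of `u` and `v`: `D₀ × C₀` has only identities. -/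
def glue : D ⥤ UnnatCat C E where
  obj d := (curry.obj u).obj ⟨d⟩
  map {d d'} f c := eqToHom (huv d c) ≫ v.map (f, 𝟙 (Discrete.mk c)) ≫ eqToHom (huv d' c).symm
  map_id d := funext fun c => by
    change _ = 𝟙 _
    rw [← prod_id', v.map_id]
    simp
  map_comp f f' := funext fun c => by
    erw [UnnatCat.comp_apply]
    simp only [Category.assoc, eqToHom_trans_assoc, eqToHom_refl, Category.id_comp,
      ← v.map_comp_assoc, prod_comp, Category.comp_id]

lemma columns_glue : columns (glue u v huv) = u := by
  have : Discrete.functor (C := C ⥤ E) (glue u v huv).obj = curry.obj u :=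
    Discrete.functor_ext fun _ => rfl
  rw [columns, this, uncurry_obj_curry_obj]

lemma rows_glue : rows (glue u v huv) = v := by
  refine CategoryTheory.Functor.ext (fun p => huv p.1 p.2.as) ?_
  rintro ⟨d, ⟨c⟩⟩ ⟨d', ⟨c'⟩⟩ ⟨f, ψ⟩
  obtain rfl := Discrete.eq_of_hom ψ
  obtain rfl := Subsingleton.elim ψ (𝟙 _)
  simp [rows, glue, UnnatCat.restrict]

lemma glue_eq (Φ : D ⥤ UnnatCat C E) (hu : columns Φ = u) (hv : rows Φ = v) :
    glue u v huv = Φ := by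
  subst hu hv
  have hobj (d : D) : (glue (columns Φ) (rows Φ) huv).obj d = Φ.obj d :=
    Functor.congr_obj (curry_obj_uncurry_obj (Discrete.functor (C := C ⥤ E) Φ.obj)) ⟨d⟩
  refine UnnatCat.functor_ext hobj fun d d' f c => ?_
  simp [glue, rows, UnnatCat.restrict]

lemma glue_comp (g : E ⥤ E') :
    glue (u ⋙ g) (v ⋙ g) (fun d c => congrArg g.obj (huv d c)) =
      glue u v huv ⋙ UnnatCat.postcomp g := by
  refine UnnatCat.functor_ext (fun _ => rfl) fun d d' f c => ?_
  simp only [glue, curry_obj_obj_obj, comp_obj, Functor.comp_map, UnnatCat.postcomp, map_comp,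
    eqToHom_map, eqToHom_naturality, eqToHom_refl, Category.id_comp]
  erw [eqToHom_refl, Category.id_comp]

end Glue

end FunnyTensor

noncomputable section

abbrev funnyTensor (D C : Cat.{u, u}) : Cat.{u, u} :=
  pushout (funnyLeftLeg D C) (funnyRightLeg D C)

namespace FunnyTensor

variable {D C E E' : Cat.{u, u}}

def transpose (k : funnyTensor D C ⟶ E) : D ⥤ UnnatCat C E :=
  glue (pushout.inl _ _ ≫ k).toFunctor (pushout.inr _ _ ≫ k).toFunctor fun d c =>
    Functor.congr_obj (congrArg Cat.Hom.toFunctor (pushout.condition_assoc k)) (⟨d⟩, ⟨c⟩)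

def untranspose (Φ : D ⥤ UnnatCat C E) : funnyTensor D C ⟶ E :=
  pushout.desc (W := E) (columns Φ).toCatHom (rows Φ).toCatHom (Cat.ext (columns_rows_agree Φ))

lemma untranspose_transpose (k : funnyTensor D C ⟶ E) : untranspose (transpose k) = k :=
  pushout.hom_ext
    (Cat.ext ((congrArg Cat.Hom.toFunctor (pushout.inl_desc _ _ _)).trans (columns_glue _ _ _)))
    (Cat.ext ((congrArg Cat.Hom.toFunctor (pushout.inr_desc _ _ _)).trans (rows_glue _ _ _)))

lemma transpose_untranspose (Φ : D ⥤ UnnatCat C E) : transpose (untranspose Φ) = Φ :=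
  glue_eq _ _ _ Φ (congrArg Cat.Hom.toFunctor (pushout.inl_desc _ _ _)).symm
    (congrArg Cat.Hom.toFunctor (pushout.inr_desc _ _ _)).symm

lemma transpose_comp (k : funnyTensor D C ⟶ E) (g : E ⟶ E') :
    transpose (k ≫ g) = transpose k ⋙ UnnatCat.postcomp g.toFunctor :=
  glue_comp (pushout.inl _ _ ≫ k).toFunctor (pushout.inr _ _ ≫ k).toFunctor _ g.toFunctor

variable (C) in
def homEquiv (D E : Cat.{u, u}) : (funnyTensor D C ⟶ E) ≃ (D ⟶ (unnatCatFunctor C).obj E) where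
  toFun k := (transpose k).toCatHom
  invFun Φ := untranspose Φ.toFunctor
  left_inv := untranspose_transpose
  right_inv Φ := Cat.ext (transpose_untranspose Φ.toFunctor)

end FunnyTensor

def funnyTensorFunctor (C : Cat.{u, u}) : Cat.{u, u} ⥤ Cat.{u, u} :=
  Adjunction.leftAdjointOfEquiv (FunnyTensor.homEquiv C) fun _ _ _ g k =>
    Cat.ext (FunnyTensor.transpose_comp k g)

def funnyTensorAdjunction (C : Cat.{u, u}) : funnyTensorFunctor C ⊣ unnatCatFunctor C :=
  Adjunction.adjunctionOfEquivLeft _ _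

end

/-- The funny tensor product `− □ C` (given by the pushout of
`D₀ × C ← D₀ × C₀ → D × C₀` in `Cat`) is left adjoint to the functor `C ⇒ −`
sending `E` to the category of functors `C ⥤ E` and unnatural transformations. -/
theorem funny_tensor_adjoint_to_unnatural (C : Cat.{u, u}) :
    ∃ F G : Cat.{u, u} ⥤ Cat.{u, u},
      (∀ D : Cat.{u, u},
        ∃ (p : Cat.of (Discrete ↥D × ↥C) ⟶ F.obj D)
          (q : Cat.of (↥D × Discrete ↥C) ⟶ F.obj D),
          IsPushout (funnyLeftLeg D C) (funnyRightLeg D C) p q) ∧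
      (∀ E : Cat.{u, u}, G.obj E = Cat.of (UnnatCat ↥C ↥E)) ∧
      Nonempty (F ⊣ G) :=
  ⟨funnyTensorFunctor C, unnatCatFunctor C,
    fun D => ⟨_, _, IsPushout.of_hasPushout (funnyLeftLeg D C) (funnyRightLeg D C)⟩,
    fun _ => rfl, ⟨funnyTensorAdjunction C⟩⟩
end

section
/- For a semiring S, matrices over S with Kronecker product form a premonoidal category; this premonoidal structure satisfies the interchange law (and is hence monoidal) if and only if S is commutative. -/
open Matrix Kronecker

/-- The category `Mat_S` of matrices over a semiring `S`: objects are natural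
numbers and morphisms `n ⟶ m` are `m × n` matrices, with matrix multiplication
as composition. -/
def MatCat (S : Type u) [Semiring S] : Type := ℕ

instance (S : Type u) [Semiring S] : CategoryTheory.Category (MatCat S) where
  Hom (n m : ℕ) := Matrix (Fin m) (Fin n) S
  id (n : ℕ) := (1 : Matrix (Fin n) (Fin n) S)
  comp {n m k : ℕ} (f : Matrix (Fin m) (Fin n) S) (g : Matrix (Fin k) (Fin m) S) := g * f
  id_comp {n m : ℕ} (f : Matrix (Fin m) (Fin n) S) := Matrix.mul_one f
  comp_id {n m : ℕ} (f : Matrix (Fin m) (Fin n) S) := Matrix.one_mul f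
  assoc {n m k l : ℕ} (f : Matrix (Fin m) (Fin n) S) (g : Matrix (Fin k) (Fin m) S)
      (h : Matrix (Fin l) (Fin k) S) := (Matrix.mul_assoc h g f).symm

/-- Left whiskering for the Kronecker tensor: `1ₙ ⊗ B`. -/
def matWhiskerLeft {S : Type u} [Semiring S] (n : ℕ) {c d : ℕ}
    (B : Matrix (Fin d) (Fin c) S) : Matrix (Fin n × Fin d) (Fin n × Fin c) S :=
  (1 : Matrix (Fin n) (Fin n) S) ⊗ₖ B

/-- Right whiskering for the Kronecker tensor: `A ⊗ 1ₙ`. -/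
def matWhiskerRight {S : Type u} [Semiring S] {a b : ℕ}
    (A : Matrix (Fin b) (Fin a) S) (n : ℕ) : Matrix (Fin b × Fin n) (Fin a × Fin n) S :=
  A ⊗ₖ (1 : Matrix (Fin n) (Fin n) S)

/-! Over any semiring, `(A ⊗ B) * (C ⊗ D) = (A * C) ⊗ (B * D)` as soon as the entries of `B`
commute with those of `C`. Entries of identity matrices commute with everything, which gives
functoriality of both whiskerings and `(A ⊗ 1) * (1 ⊗ B) = A ⊗ B`. In the other order,
`(1 ⊗ B) * (A ⊗ 1)` has entries `B j l * A i k`, so interchange says that all such products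
commute, and `1 × 1` matrices reach every pair of scalars. -/

namespace Matrix

variable {l m n p l' m' n' α : Type*}

theorem commute_one_apply_left [MulZeroOneClass α] [DecidableEq n] (i j : n) (x : α) :
    Commute ((1 : Matrix n n α) i j) x := by
  rw [one_apply]
  split_ifs
  exacts [Commute.one_left x, Commute.zero_left x]

theorem mul_kronecker_mul_of_commute [NonUnitalSemiring α] [Fintype m] [Fintype m']
    (A : Matrix l m α) (B : Matrix m n α) (A' : Matrix l' m' α) (B' : Matrix m' n' α)
    (h : ∀ i j k k', Commute (B k j) (A' i k')) :
    (A * B) ⊗ₖ (A' * B') = A ⊗ₖ A' * B ⊗ₖ B' := by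
  ext ⟨i, i'⟩ ⟨j, j'⟩
  simp only [kronecker_apply, mul_apply, Fintype.sum_prod_type, Finset.sum_mul_sum]
  refine Finset.sum_congr rfl fun k _ => Finset.sum_congr rfl fun k' _ => ?_
  rw [mul_assoc, ← mul_assoc (B k j), (h i' j k k').eq, mul_assoc, mul_assoc]

variable [Semiring α]

theorem one_kronecker_mul_one_kronecker [DecidableEq l] [Fintype l] [Fintype n]
    (B : Matrix m n α) (B' : Matrix n p α) :
    (1 : Matrix l l α) ⊗ₖ B * (1 : Matrix l l α) ⊗ₖ B' = (1 : Matrix l l α) ⊗ₖ (B * B') := by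
  simpa using (mul_kronecker_mul_of_commute (1 : Matrix l l α) 1 B B'
    fun _ j k _ => commute_one_apply_left k j _).symm

theorem kronecker_one_mul_kronecker_one [DecidableEq n] [Fintype m] [Fintype n]
    (A : Matrix l m α) (A' : Matrix m p α) :
    A ⊗ₖ (1 : Matrix n n α) * A' ⊗ₖ (1 : Matrix n n α) = (A * A') ⊗ₖ (1 : Matrix n n α) := by
  simpa using (mul_kronecker_mul_of_commute A A' (1 : Matrix n n α) 1
    fun i _ _ k' => (commute_one_apply_left i k' _).symm).symm

theorem kronecker_one_mul_one_kronecker [DecidableEq m] [DecidableEq n] [Fintype m] [Fintype n]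
    (A : Matrix l m α) (B : Matrix n p α) :
    A ⊗ₖ (1 : Matrix n n α) * (1 : Matrix m m α) ⊗ₖ B = A ⊗ₖ B := by
  simpa using (mul_kronecker_mul_of_commute A (1 : Matrix m m α) (1 : Matrix n n α) B
    fun _ j k _ => commute_one_apply_left k j _).symm

theorem one_kronecker_mul_kronecker_one [DecidableEq l] [DecidableEq p] [Fintype l] [Fintype p]
    (A : Matrix l m α) (B : Matrix n p α) :
    (1 : Matrix l l α) ⊗ₖ B * (A ⊗ₖ (1 : Matrix p p α)) = kroneckerMap (fun a b => b * a) A B := by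
  ext ⟨i, j⟩ ⟨k, k'⟩
  simp [mul_apply, kroneckerMap_apply, one_apply, Fintype.sum_prod_type, ite_mul, mul_ite]

end Matrix

/-- Matrices over a semiring `S` with the Kronecker product form a premonoidal
category: whiskering on either side is functorial.  This premonoidal structure
satisfies the interchange law — and hence is monoidal — if and only if `S` is
commutative. -/
theorem matrices_premonoidal_interchange_iff_comm (S : Type u) [Semiring S] :
    -- whiskering on either side is functorial (binoidal/premonoidal structure)
    (∀ (n c d e : ℕ) (B : Matrix (Fin d) (Fin c) S) (B' : Matrix (Fin e) (Fin d) S),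
        matWhiskerLeft n (B' * B) = matWhiskerLeft n B' * matWhiskerLeft n B) ∧
    (∀ (n : ℕ) (c : ℕ), matWhiskerLeft n (1 : Matrix (Fin c) (Fin c) S) = 1) ∧
    (∀ (n a b f : ℕ) (A : Matrix (Fin b) (Fin a) S) (A' : Matrix (Fin f) (Fin b) S),
        matWhiskerRight (A' * A) n = matWhiskerRight A' n * matWhiskerRight A n) ∧
    (∀ (n a : ℕ), matWhiskerRight (1 : Matrix (Fin a) (Fin a) S) n = 1) ∧
    -- interchange holds iff `S` is commutative
    ((∀ (a b c d : ℕ) (A : Matrix (Fin b) (Fin a) S) (B : Matrix (Fin d) (Fin c) S),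
        matWhiskerLeft b B * matWhiskerRight A c =
          matWhiskerRight A d * matWhiskerLeft a B) ↔
      ∀ x y : S, x * y = y * x) := by
  refine ⟨fun _ _ _ _ B B' => (one_kronecker_mul_one_kronecker B' B).symm,
    fun _ _ => one_kronecker_one, fun _ _ _ _ A A' => (kronecker_one_mul_kronecker_one A' A).symm,
    fun _ _ => one_kronecker_one, ?_⟩
  simp only [matWhiskerLeft, matWhiskerRight, one_kronecker_mul_kronecker_one,
    kronecker_one_mul_one_kronecker]
  refine ⟨fun h x y => ?_, fun h _ _ _ _ A B => ext fun _ _ => h _ _⟩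
  simpa [kroneckerMap_apply] using congrFun₂ (h 1 1 1 1 (of ![![y]]) (of ![![x]])) (0, 0) (0, 0)
end

section
/- In the free monoidal category on a signature, the tensor of two diagrams defined by concatenating box lists and shifting offsets — (f ⊗ g).boxes = f.boxes ++ g.boxes and (f ⊗ g).offsets = f.offsets ++ map (+ length(cod f)) g.offsets — is associative, unital with respect to the empty diagram, and satisfies the interchange law up to the interchanger congruence. -/
/-- A monoidal signature: generating objects, generating arrows, and domain and
codomain functions into lists of generating objects. -/
structure Sig where
  Ob : Type u
  Ar : Type v
  dom : Ar → List Ob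
  cod : Ar → List Ob

/-- A diagram over a monoidal signature: a domain and codomain (lists of
generating objects), a list of boxes and, for each box, an offset (the number of
wires passing to its left). -/
structure Diagram (S : Sig) where
  dom : List S.Ob
  cod : List S.Ob
  boxes : List S.Ar
  offsets : List ℕ

/-- Well-typedness of a list of boxes and offsets between two lists of wires. -/
def Valid (S : Sig) : List S.Ob → List S.Ar → List ℕ → List S.Ob → Prop
  | u, [], offs, v => offs = [] ∧ u = v
  | u, b :: bs, offs, v =>
    match offs with
    | [] => False
    | o :: os =>
      ∃ pre post : List S.Ob, pre.length = o ∧ u = pre ++ (S.dom b ++ post) ∧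
        Valid S (pre ++ (S.cod b ++ post)) bs os v

/-- A diagram is well-typed when its boxes and offsets fit its boundary. -/
def Diagram.Valid' {S : Sig} (d : Diagram S) : Prop :=
  Valid S d.dom d.boxes d.offsets d.cod

/-- Tensor of diagrams: concatenate the box lists and shift the offsets of the
second diagram by the width of the first. -/
def Diagram.tensor {S : Sig} (f g : Diagram S) : Diagram S :=
  ⟨f.dom ++ g.dom, f.cod ++ g.cod, f.boxes ++ g.boxes,
    f.offsets ++ g.offsets.map (· + f.cod.length)⟩

/-- The empty diagram. -/
def Diagram.empty (S : Sig) : Diagram S := ⟨[], [], [], []⟩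

/-- Composition of diagrams (concatenation of boxes and offsets). -/
def Diagram.comp {S : Sig} (f g : Diagram S) : Diagram S :=
  ⟨f.dom, g.cod, f.boxes ++ g.boxes, f.offsets ++ g.offsets⟩

/-- One interchanger step: two adjacent boxes acting on disjoint sets of wires
(the second strictly to the right of the first) are swapped. -/
inductive InterchangeStep (S : Sig) : Diagram S → Diagram S → Prop
  | mk (dom cod : List S.Ob) (pre post : List S.Ar) (preoff postoff : List ℕ)
      (b c : S.Ar) (i j : ℕ) (h : i + (S.cod b).length ≤ j) :
      InterchangeStep S
        ⟨dom, cod, pre ++ b :: c :: post, preoff ++ i :: j :: postoff⟩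
        ⟨dom, cod, pre ++ c :: b :: post,
          preoff ++ (j - (S.cod b).length + (S.dom b).length) :: i :: postoff⟩

/-!
Associativity and unitality hold on the nose, since the tensor only concatenates lists and
shifts offsets. For the interchange law, `(f₁ ; f₂) ⊗ (g₁ ; g₂)` lists the boxes as
`f₁ f₂ g₁ g₂` and `(f₁ ⊗ g₁) ; (f₂ ⊗ g₂)` as `f₁ g₁ f₂ g₂`, so the block `f₂` has to slide
to the right past the block `g₁`. Every box of `g₁` sits to the right of all the wires of
`f₂`, so this is a sequence of interchanger steps: the boxes of `f₂` are moved one at a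
time, last one first, and a box moves past `g₁` one box at a time.
-/

open Relation

variable {S : Sig}

theorem Valid.length_eq {u v : List S.Ob} {bs : List S.Ar} {offs : List ℕ}
    (h : Valid S u bs offs v) : bs.length = offs.length := by
  induction bs generalizing u offs with
  | nil => obtain ⟨rfl, -⟩ := h; rfl
  | cons b bs ih =>
    cases offs with
    | nil => exact h.elim
    | cons o os =>
      obtain ⟨_, _, _, _, h'⟩ := h
      simp [ih h']

namespace InterchangeStep

/-- The offsets of the block are written `o + (m + |cod b|)` so that the interchanger's truncated
`j - |cod b| + |dom b|` becomes `o + (m + |dom b|)`. -/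
theorem eqvGen_box_past (dom cod : List S.Ob) (b : S.Ar) {i m : ℕ} (hi : i ≤ m)
    {cs : List S.Ar} {os : List ℕ} (hlen : cs.length = os.length)
    (pre post : List S.Ar) (preoff postoff : List ℕ) :
    EqvGen (InterchangeStep S)
      ⟨dom, cod, pre ++ b :: cs ++ post,
        preoff ++ i :: os.map (· + (m + (S.cod b).length)) ++ postoff⟩
      ⟨dom, cod, pre ++ cs ++ b :: post,
        preoff ++ os.map (· + (m + (S.dom b).length)) ++ i :: postoff⟩ := by
  induction cs generalizing os pre preoff with
  | nil =>
    obtain rfl : os = [] := List.eq_nil_of_length_eq_zero hlen.symm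
    simpa using EqvGen.refl _
  | cons c cs ih =>
    obtain ⟨o, os, rfl⟩ : ∃ o os', os = o :: os' := List.exists_cons_of_length_eq_add_one hlen.symm
    have step := InterchangeStep.mk dom cod pre (cs ++ post) preoff
      (os.map (· + (m + (S.cod b).length)) ++ postoff) b c i (o + (m + (S.cod b).length))
      (by omega)
    have hshift : o + (m + (S.cod b).length) - (S.cod b).length + (S.dom b).length
        = o + (m + (S.dom b).length) := by omega
    rw [hshift] at step
    refine EqvGen.trans _ _ _ (EqvGen.rel _ _ (by simpa using step)) ?_
    simpa using ih (by simpa using hlen) (pre ++ [c]) (preoff ++ [o + (m + (S.dom b).length)])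

theorem eqvGen_block_past (dom cod : List S.Ob) {u v : List S.Ob} {bs : List S.Ar}
    {offs : List ℕ} (hv : Valid S u bs offs v) {cs : List S.Ar} {os : List ℕ}
    (hlen : cs.length = os.length) (pre post : List S.Ar) (preoff postoff : List ℕ) :
    EqvGen (InterchangeStep S)
      ⟨dom, cod, pre ++ bs ++ cs ++ post, preoff ++ offs ++ os.map (· + v.length) ++ postoff⟩
      ⟨dom, cod, pre ++ cs ++ bs ++ post, preoff ++ os.map (· + u.length) ++ offs ++ postoff⟩ := by
  induction bs generalizing u offs pre preoff with
  | nil =>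
    obtain ⟨rfl, rfl⟩ := hv
    simpa using EqvGen.refl _
  | cons b bs ih =>
    cases offs with
    | nil => exact hv.elim
    | cons i offs =>
      obtain ⟨l, r, rfl, rfl, hv'⟩ := hv
      have moveTail := ih hv' (pre ++ [b]) (preoff ++ [l.length])
      have moveHead := eqvGen_box_past dom cod b (Nat.le_add_right l.length r.length) hlen
        pre (bs ++ post) preoff (offs ++ postoff)
      have hcod : (l ++ (S.cod b ++ r)).length = l.length + r.length + (S.cod b).length := by
        simp only [List.length_append]; omega
      have hdom : (l ++ (S.dom b ++ r)).length = l.length + r.length + (S.dom b).length := by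
        simp only [List.length_append]; omega
      rw [hcod] at moveTail
      rw [hdom]
      exact EqvGen.trans _ _ _ (by simpa using moveTail) (by simpa using moveHead)

end InterchangeStep

namespace Diagram

theorem tensor_assoc (f g h : Diagram S) :
    (f.tensor g).tensor h = f.tensor (g.tensor h) := by
  simp only [tensor, List.append_assoc, List.map_append, List.map_map, List.length_append,
    Function.comp_def, add_comm f.cod.length, add_assoc]

theorem tensor_empty (f : Diagram S) : f.tensor (empty S) = f := by
  simp [tensor, empty]

theorem empty_tensor (f : Diagram S) : (empty S).tensor f = f := by
  simp [tensor, empty]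

theorem comp_tensor_comp_eqvGen {f₁ f₂ g₁ g₂ : Diagram S} (hf : f₁.cod = f₂.dom)
    (vf₂ : f₂.Valid') (hg₁ : g₁.boxes.length = g₁.offsets.length) :
    EqvGen (InterchangeStep S)
      ((f₁.comp f₂).tensor (g₁.comp g₂)) ((f₁.tensor g₁).comp (f₂.tensor g₂)) := by
  have slide := InterchangeStep.eqvGen_block_past (f₁.dom ++ g₁.dom) (f₂.cod ++ g₂.cod) vf₂ hg₁
    f₁.boxes g₂.boxes f₁.offsets (g₂.offsets.map (· + f₂.cod.length))
  rw [← hf] at slide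
  simpa [comp, tensor] using slide

end Diagram

theorem diagram_tensor_assoc_unital_interchange_general {S : Sig}
    (f g h f₁ f₂ g₁ g₂ : Diagram S)
    (hf : f₁.cod = f₂.dom) (vf₂ : f₂.Valid') (vg₁ : g₁.Valid') :
    (f.tensor g).tensor h = f.tensor (g.tensor h) ∧
      f.tensor (Diagram.empty S) = f ∧ (Diagram.empty S).tensor f = f ∧
      Relation.EqvGen (InterchangeStep S)
        ((f₁.comp f₂).tensor (g₁.comp g₂)) ((f₁.tensor g₁).comp (f₂.tensor g₂)) :=
  ⟨f.tensor_assoc g h, f.tensor_empty, f.empty_tensor,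
    Diagram.comp_tensor_comp_eqvGen hf vf₂ (Valid.length_eq vg₁)⟩

/-- In the free monoidal category on a signature, the tensor of diagrams defined
by concatenating box lists and shifting offsets is associative, unital with
respect to the empty diagram, and satisfies the interchange law up to the
congruence generated by the interchanger relation. -/
theorem diagram_tensor_assoc_unital_interchange {S : Sig}
    (f g h f₁ f₂ g₁ g₂ : Diagram S)
    (hf : f₁.cod = f₂.dom) (hg : g₁.cod = g₂.dom)
    (vf₁ : f₁.Valid') (vf₂ : f₂.Valid') (vg₁ : g₁.Valid') (vg₂ : g₂.Valid') :
    (f.tensor g).tensor h = f.tensor (g.tensor h) ∧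
      f.tensor (Diagram.empty S) = f ∧ (Diagram.empty S).tensor f = f ∧
      Relation.EqvGen (InterchangeStep S)
        ((f₁.comp f₂).tensor (g₁.comp g₂)) ((f₁.tensor g₁).comp (f₂.tensor g₂)) :=
  diagram_tensor_assoc_unital_interchange_general f g h f₁ f₂ g₁ g₂ hf vf₂ vg₁
end
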